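/- The function f(x) = Σ_{ω∈L} exp(-π|ω+x|²/a(L))/(ω+x) − Σ_{ω∈L∖{0}} exp(-π|ω|²/a(L) + 2πi E_L(ω,x))/ω satisfies f(x+λ) = f(x) for every λ ∈ L and x ∈ ℂ∖L. -/
import Mathlib


open scoped Real Topology
open Complex MeasureTheory Filter ComplexConjugate

noncomputable section

/-- The lattice point `m·ω₁ + n·ω₂` indexed by `p = (m, n) : ℤ × ℤ`. -/
def lat (ω₁ ω₂ : ℂ) (p : ℤ × ℤ) : ℂ := (p.1 : ℂ) * ω₁ + (p.2 : ℂ) * ω₂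

/-- Membership in the lattice `L = ℤω₁ + ℤω₂`. -/
def inLat (ω₁ ω₂ : ℂ) (x : ℂ) : Prop := ∃ p : ℤ × ℤ, x = lat ω₁ ω₂ p

/-- The covolume `a(L) = Im(conj ω₁ · ω₂)`. -/
def covol (ω₁ ω₂ : ℂ) : ℝ := (conj ω₁ * ω₂).im

/-- The symplectic form `E_L(x,y) = Im(conj x · y)/a(L)`. -/
def Esymp (ω₁ ω₂ : ℂ) (x y : ℂ) : ℝ := (conj x * y).im / covol ω₁ ω₂

/-- The function `f(x)` from the main theorem:
`Σ_{ω∈L} exp(-π|ω+x|²/a)/(ω+x) − Σ_{ω∈L∖0} exp(-π|ω|²/a + 2πi E(ω,x))/ω`. -/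
def zf (ω₁ ω₂ : ℂ) (x : ℂ) : ℂ :=
  (∑' p : ℤ × ℤ,
    Complex.exp (-(Real.pi * Complex.normSq (lat ω₁ ω₂ p + x) / covol ω₁ ω₂ : ℝ))
      / (lat ω₁ ω₂ p + x))
  - ∑' p : {p : ℤ × ℤ // p ≠ (0, 0)},
      Complex.exp ((-(Real.pi * Complex.normSq (lat ω₁ ω₂ p.1) / covol ω₁ ω₂ : ℝ) : ℂ)
          + 2 * (Real.pi : ℂ) * I * (Esymp ω₁ ω₂ (lat ω₁ ω₂ p.1) x : ℝ))
        / lat ω₁ ω₂ p.1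

lemma lat_add (ω₁ ω₂ : ℂ) (q p : ℤ × ℤ) :
    lat ω₁ ω₂ (q + p) = lat ω₁ ω₂ q + lat ω₁ ω₂ p := by
  simp only [lat, Prod.fst_add, Prod.snd_add]
  push_cast
  ring

lemma Esymp_add (ω₁ ω₂ a x y : ℂ) :
    Esymp ω₁ ω₂ a (x + y) = Esymp ω₁ ω₂ a x + Esymp ω₁ ω₂ a y := by
  simp only [Esymp, mul_add, Complex.add_im, add_div]

lemma Esymp_lat (ω₁ ω₂ : ℂ) (h : 0 < covol ω₁ ω₂) (q p : ℤ × ℤ) :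
    Esymp ω₁ ω₂ (lat ω₁ ω₂ q) (lat ω₁ ω₂ p) = ((q.1 * p.2 - q.2 * p.1 : ℤ) : ℝ) := by
  have ha : covol ω₁ ω₂ ≠ 0 := ne_of_gt h
  rw [Esymp, div_eq_iff ha]
  simp only [lat, covol, map_add, map_mul, Complex.add_im, Complex.mul_im,
    Complex.add_re, Complex.mul_re, Complex.conj_re, Complex.conj_im,
    Complex.intCast_re, Complex.intCast_im]
  push_cast
  ring

/-- `f` is `L`-periodic. -/
theorem stmt5 (ω₁ ω₂ : ℂ) (h : 0 < covol ω₁ ω₂) (x : ℂ) (hx : ¬ inLat ω₁ ω₂ x)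
    (p : ℤ × ℤ) : zf ω₁ ω₂ (x + lat ω₁ ω₂ p) = zf ω₁ ω₂ x := by
  unfold zf
  congr 1
  · -- first sum: reindex q ↦ q + p
    calc (∑' q : ℤ × ℤ,
        Complex.exp (-(Real.pi * Complex.normSq (lat ω₁ ω₂ q + (x + lat ω₁ ω₂ p)) / covol ω₁ ω₂ : ℝ))
          / (lat ω₁ ω₂ q + (x + lat ω₁ ω₂ p)))
        = ∑' q : ℤ × ℤ,
        Complex.exp (-(Real.pi * Complex.normSq (lat ω₁ ω₂ (q + p) + x) / covol ω₁ ω₂ : ℝ))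
          / (lat ω₁ ω₂ (q + p) + x) := by
          refine tsum_congr fun q => ?_
          rw [lat_add]
          ring_nf
      _ = _ := (Equiv.addRight p).tsum_eq
          (fun q => Complex.exp (-(Real.pi * Complex.normSq (lat ω₁ ω₂ q + x) / covol ω₁ ω₂ : ℝ))
          / (lat ω₁ ω₂ q + x))
  · -- second sum: termwise equality
    refine tsum_congr fun q => ?_
    congr 1
    rw [Esymp_add, Esymp_lat ω₁ ω₂ h, Complex.ofReal_add, Complex.ofReal_intCast, mul_add,
      ← add_assoc, Complex.exp_add, mul_comm (2 * (Real.pi : ℂ) * I)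
        (((q.1.1 * p.2 - q.1.2 * p.1 : ℤ) : ℂ)),
      Complex.exp_int_mul_two_pi_mul_I, mul_one]
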